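/- Let G=(V,E) be a finite graph with positive edge costs and let U be a nonempty proper subset of V. Suppose there is no set Q with V∖U ⊊ Q ⊊ V and d(Q) ≤ d(U). Then for every vertex x ∈ U, the cut (U, V∖U) is the unique minimum ({x}, V∖U)-terminal cut of G. -/
import Mathlib


open Finset

variable {V : Type*} [Fintype V] [DecidableEq V]

/- The value of the cut `(U, Uᶜ)`: total cost of edges with exactly one endpoint in `U`. -/
open Classical in
noncomputable def cutVal (G : SimpleGraph V) (c : V → V → ℝ) (U : Finset V) : ℝ :=
  ∑ u ∈ U, ∑ v ∈ Uᶜ, if G.Adj u v then c u v else 0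

/-- `(X, Xᶜ)` is an `(S,T)`-terminal cut: `S ⊆ X ⊆ Tᶜ`. -/
def IsTerminalCut (S T X : Finset V) : Prop := S ⊆ X ∧ X ⊆ Tᶜ

/-- `(X, Xᶜ)` is a minimum `(S,T)`-terminal cut. -/
def IsMinTerminalCut (G : SimpleGraph V) (c : V → V → ℝ) (S T X : Finset V) : Prop :=
  IsTerminalCut S T X ∧ ∀ Y : Finset V, IsTerminalCut S T Y → cutVal G c X ≤ cutVal G c Y

/-- `(X, Xᶜ)` is the unique minimum `(S,T)`-terminal cut. -/
def IsUniqueMinTerminalCut (G : SimpleGraph V) (c : V → V → ℝ) (S T X : Finset V) : Prop :=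
  IsMinTerminalCut G c S T X ∧ ∀ Y : Finset V, IsMinTerminalCut G c S T Y → Y = X



open Classical in
lemma cutVal_compl (G : SimpleGraph V) (c : V → V → ℝ) (hcsymm : ∀ u v, c u v = c v u)
    (X : Finset V) : cutVal G c Xᶜ = cutVal G c X := by
  simp only [cutVal, compl_compl]
  rw [Finset.sum_comm]
  refine Finset.sum_congr rfl fun u _ => Finset.sum_congr rfl fun v _ => ?_
  rw [G.adj_comm, hcsymm]

/-- If there is no set Q with Uᶜ ⊊ Q ⊊ V and d(Q) ≤ d(U), then for every x ∈ U the
cut (U, Uᶜ) is the unique minimum ({x}, Uᶜ)-terminal cut. -/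
theorem empty_collection_unique_min_terminal_cut
    (G : SimpleGraph V)
    (c : V → V → ℝ) (hc : ∀ u v, G.Adj u v → 0 < c u v) (hcsymm : ∀ u v, c u v = c v u)
    (U : Finset V) (hUne : U.Nonempty) (hUp : U ≠ Finset.univ)
    (hCempty : ¬ ∃ Q : Finset V, Uᶜ ⊂ Q ∧ Q ⊂ Finset.univ ∧ cutVal G c Q ≤ cutVal G c U) :
    ∀ x ∈ U, IsUniqueMinTerminalCut G c {x} Uᶜ U := by
  intro x hx
  have key : ∀ X : Finset V, IsTerminalCut {x} Uᶜ X → X ≠ U →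
      cutVal G c U < cutVal G c X := by
    rintro X ⟨hS, hT⟩ hne
    have hxX : x ∈ X := hS (Finset.mem_singleton_self x)
    have hXU : X ⊆ U := by simpa using hT
    have hss : X ⊂ U := lt_of_le_of_ne hXU hne
    have hUcQ : Uᶜ ⊂ Xᶜ := by
      rwa [Finset.compl_ssubset_compl]
    have hQuniv : Xᶜ ⊂ Finset.univ := by
      rw [Finset.ssubset_univ_iff]
      intro h
      have : x ∈ Xᶜ := h ▸ Finset.mem_univ x
      exact (Finset.mem_compl.mp this) hxX
    have : ¬ cutVal G c Xᶜ ≤ cutVal G c U := fun hle =>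
      hCempty ⟨Xᶜ, hUcQ, hQuniv, hle⟩
    rw [cutVal_compl G c hcsymm] at this
    exact lt_of_not_ge this
  have hTC : IsTerminalCut {x} Uᶜ U :=
    ⟨Finset.singleton_subset_iff.mpr hx, by simp⟩
  refine ⟨⟨hTC, fun Y hY => ?_⟩, fun Y hY => ?_⟩
  · by_cases h : Y = U
    · subst h; exact le_refl _
    · exact le_of_lt (key Y hY h)
  · by_contra h
    have h1 := key Y hY.1 h
    have h2 := hY.2 U hTC
    linarith
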